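/- arXiv:2210.15273 — 2 statements merged into one kernel-verified Lean document; each statement's English description precedes it below -/
import Mathlib

section
/- In a delta-matroid D, every feasible set X is sandwiched between a minimum-cardinality feasible set and a maximum-cardinality feasible set: there exist A ∈ F_min(D) and B ∈ F_max(D) with A ⊆ X ⊆ B. -/
/-!
Among the minimum-cardinality feasible sets pick `A` with `A \ X` as small as possible. If some
`u ∈ A \ X` existed, the exchange axiom for `A`, `X`, `u` would give `A ∆ {u, v}` feasible with
`v ∈ A ∆ X`: either it is smaller than `A`, or it is again of minimum size with fewer elements
outside `X`. The statement for maximum-cardinality sets follows by twisting with the union of all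
feasible sets, which preserves the exchange axiom and exchanges small and large sets.
-/

open Finset Polynomial

variable {α : Type*} [DecidableEq α]

/-- The twist of a collection of feasible sets with respect to `A`. -/
noncomputable def SS.twist (A : Finset α) (F : Finset (Finset α)) : Finset (Finset α) :=
  F.image (fun X => symmDiff A X)

/-- Loop complementation at a single element `e`. -/
noncomputable def SS.lc (e : α) (F : Finset (Finset α)) : Finset (Finset α) :=
  symmDiff F ((F.filter (fun X => e ∉ X)).image (insert e))

/-- The two generating operations: twist `*` and loop complementation `×`. -/
inductive SS.Op | star | cross

/-- Apply a single operation at a single element. -/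
noncomputable def SS.opElem : SS.Op → α → Finset (Finset α) → Finset (Finset α)
  | .star, e, F => SS.twist {e} F
  | .cross, e, F => SS.lc e F

/-- Apply a word in `{*, ×}` at a single element. -/
noncomputable def SS.wordElem (w : List SS.Op) (e : α) (F : Finset (Finset α)) : Finset (Finset α) :=
  w.foldl (fun F o => SS.opElem o e F) F

/-- Apply a word in `{*, ×}` elementwise on a subset `A`. -/
noncomputable def SS.wordOn (w : List SS.Op) (A : Finset α) (F : Finset (Finset α)) : Finset (Finset α) :=
  A.toList.foldl (fun F e => SS.wordElem w e F) F

/-- Size of a largest feasible set. -/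
noncomputable def SS.rmax (F : Finset (Finset α)) : ℕ := F.sup Finset.card

/-- Size of a smallest feasible set. -/
noncomputable def SS.rmin (F : Finset (Finset α)) : ℕ := sInf (Finset.card '' (F : Set (Finset α)))

/-- The width of a set system. -/
noncomputable def SS.width (F : Finset (Finset α)) : ℕ := SS.rmax F - SS.rmin F

/-- The minimum-cardinality feasible sets. -/
noncomputable def SS.Fmin (F : Finset (Finset α)) : Finset (Finset α) :=
  F.filter (fun X => X.card = SS.rmin F)

/-- The maximum-cardinality feasible sets. -/
noncomputable def SS.Fmax (F : Finset (Finset α)) : Finset (Finset α) :=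
  F.filter (fun X => X.card = SS.rmax F)

/-- The partial-`w` polynomial of a set system with ground set `E`. -/
noncomputable def SS.poly (w : List SS.Op) (E : Finset α) (F : Finset (Finset α)) :
    Polynomial ℤ :=
  ∑ A ∈ E.powerset, (Polynomial.X : Polynomial ℤ) ^ SS.width (SS.wordOn w A F)

/-- A proper set system satisfying the symmetric exchange axiom. -/
noncomputable def SS.IsDeltaMatroid (F : Finset (Finset α)) : Prop :=
  F.Nonempty ∧ ∀ X ∈ F, ∀ Y ∈ F, ∀ u ∈ symmDiff X Y,
    ∃ v ∈ symmDiff X Y, symmDiff X {u, v} ∈ F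

/-- Apply a sequence of single-element twists and loop complementations. -/
noncomputable def SS.seqApply : List (SS.Op × α) → Finset (Finset α) → Finset (Finset α)
  | [], F => F
  | (o, e) :: s, F => SS.seqApply s (SS.opElem o e F)

/-- A set system is vf-safe if every sequence of single-element twists and loop
complementations yields a delta-matroid. -/
noncomputable def SS.VfSafe (F : Finset (Finset α)) : Prop :=
  ∀ s : List (SS.Op × α), SS.IsDeltaMatroid (SS.seqApply s F)

/-- The direct sum of two set systems. -/
noncomputable def SS.dsum (F F' : Finset (Finset α)) : Finset (Finset α) :=
  (F ×ˢ F').image (fun p => p.1 ∪ p.2)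

namespace SS

variable {F : Finset (Finset α)}

omit [DecidableEq α] in
theorem mem_Fmin_iff (hF : F.Nonempty) {A : Finset α} :
    A ∈ Fmin F ↔ A ∈ F ∧ ∀ Y ∈ F, A.card ≤ Y.card := by
  have hle : ∀ Y ∈ F, rmin F ≤ Y.card := fun Y hY => Nat.sInf_le ⟨Y, hY, rfl⟩
  refine ⟨fun h => ?_, fun ⟨hA, hAmin⟩ => ?_⟩
  · obtain ⟨hA, hcard⟩ := mem_filter.1 h
    exact ⟨hA, hcard ▸ hle⟩
  · refine mem_filter.2 ⟨hA, le_antisymm ?_ (hle A hA)⟩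
    exact le_csInf ((coe_nonempty.2 hF).image card) (by rintro _ ⟨Y, hY, rfl⟩; exact hAmin Y hY)

omit [DecidableEq α] in
theorem mem_Fmax_iff {B : Finset α} :
    B ∈ Fmax F ↔ B ∈ F ∧ ∀ Y ∈ F, Y.card ≤ B.card := by
  refine ⟨fun h => ?_, fun ⟨hB, hBmax⟩ => ?_⟩
  · obtain ⟨hB, hcard⟩ := mem_filter.1 h
    exact ⟨hB, fun Y hY => hcard ▸ le_sup hY⟩
  · exact mem_filter.2 ⟨hB, le_antisymm (le_sup hB) (Finset.sup_le hBmax)⟩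

theorem IsDeltaMatroid.twist (hD : IsDeltaMatroid F) (T : Finset α) :
    IsDeltaMatroid (twist T F) := by
  refine ⟨hD.1.image _, ?_⟩
  simp only [SS.twist, forall_mem_image]
  intro X hX Y hY u hu
  have hXY : symmDiff (symmDiff T X) (symmDiff T Y) = symmDiff X Y := by
    simp [symmDiff_symmDiff_symmDiff_comm]
  rw [hXY] at hu ⊢
  obtain ⟨v, hv, hXuv⟩ := hD.2 X hX Y hY u hu
  exact ⟨v, hv, mem_image.2 ⟨_, hXuv, (symmDiff_assoc _ _ _).symm⟩⟩

theorem IsDeltaMatroid.exists_card_le_sdiff_ssubset (hD : IsDeltaMatroid F) {A X : Finset α}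
    (hA : A ∈ F) (hX : X ∈ F) {u : α} (hu : u ∈ A \ X) :
    ∃ Z ∈ F, Z.card ≤ A.card ∧ Z \ X ⊂ A \ X := by
  obtain ⟨huA, huX⟩ := mem_sdiff.1 hu
  obtain ⟨v, hv, hZ⟩ := hD.2 A hA X hX u (mem_symmDiff.2 (Or.inl ⟨huA, huX⟩))
  refine ⟨_, hZ, ?_, ?_⟩
  · have hZA : symmDiff A {u, v} ⊆ insert v (A.erase u) := by
      intro a
      simp only [mem_symmDiff, mem_insert, mem_singleton, mem_erase]
      grind
    calc (symmDiff A {u, v}).card ≤ (insert v (A.erase u)).card := card_le_card hZA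
      _ ≤ (A.erase u).card + 1 := card_insert_le _ _
      _ = A.card := card_erase_add_one huA
  · -- `v` itself cannot lie outside both `A` and `X`, since `v ∈ A ∆ X`.
    have hZX : symmDiff A {u, v} \ X ⊆ (A \ X).erase u := by
      intro a
      simp only [mem_sdiff, mem_symmDiff, mem_insert, mem_singleton, mem_erase] at hv ⊢
      grind
    exact hZX.trans_ssubset (erase_ssubset hu)

theorem IsDeltaMatroid.exists_mem_Fmin_subset (hD : IsDeltaMatroid F) {X : Finset α}
    (hX : X ∈ F) : ∃ A ∈ Fmin F, A ⊆ X := by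
  obtain ⟨A₀, hA₀, hA₀min⟩ := F.exists_min_image card hD.1
  have hne : (Fmin F).Nonempty := ⟨A₀, (mem_Fmin_iff hD.1).2 ⟨hA₀, hA₀min⟩⟩
  obtain ⟨A, hA, hAmin⟩ := (Fmin F).exists_min_image (fun A => (A \ X).card) hne
  refine ⟨A, hA, ?_⟩
  by_contra hAX
  obtain ⟨u, huA, huX⟩ := not_subset.1 hAX
  rw [mem_Fmin_iff hD.1] at hA
  obtain ⟨Z, hZ, hZA, hZX⟩ :=
    hD.exists_card_le_sdiff_ssubset hA.1 hX (mem_sdiff.2 ⟨huA, huX⟩)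
  have hZmin : Z ∈ Fmin F :=
    (mem_Fmin_iff hD.1).2 ⟨hZ, fun Y hY => hZA.trans (hA.2 Y hY)⟩
  exact (hAmin Z hZmin).not_gt (card_lt_card hZX)

theorem IsDeltaMatroid.exists_mem_Fmax_superset (hD : IsDeltaMatroid F) {X : Finset α}
    (hX : X ∈ F) : ∃ B ∈ Fmax F, X ⊆ B := by
  set E := F.sup id
  have hXE : ∀ Y ∈ F, Y ⊆ E := fun Y hY => le_sup (f := id) hY
  have hE : ∀ Y ∈ F, symmDiff E Y = E \ Y := fun Y hY => symmDiff_of_ge (hXE Y hY)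
  have hEX : E \ X ∈ SS.twist E F := mem_image.2 ⟨X, hX, hE X hX⟩
  obtain ⟨A, hA, hAX⟩ := (hD.twist E).exists_mem_Fmin_subset hEX
  obtain ⟨hA, hAmin⟩ := (mem_Fmin_iff (hD.twist E).1).1 hA
  obtain ⟨B, hB, rfl⟩ := mem_image.1 hA
  rw [hE B hB] at hAX hAmin
  refine ⟨B, mem_Fmax_iff.2 ⟨hB, fun Y hY => ?_⟩,
    (sdiff_subset_sdiff_iff_subset (hXE B hB) (hXE X hX)).1 hAX⟩
  have hcard := hAmin _ (mem_image_of_mem _ hY)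
  rw [hE Y hY, card_sdiff_of_subset (hXE B hB), card_sdiff_of_subset (hXE Y hY)] at hcard
  have := card_le_card (hXE Y hY)
  omega

end SS

open SS

theorem stmt11 (F : Finset (Finset α)) (hD : SS.IsDeltaMatroid F)
    (X : Finset α) (hX : X ∈ F) :
    ∃ A ∈ SS.Fmin F, ∃ B ∈ SS.Fmax F, A ⊆ X ∧ X ⊆ B := by
  obtain ⟨A, hA, hAX⟩ := hD.exists_mem_Fmin_subset hX
  obtain ⟨B, hB, hXB⟩ := hD.exists_mem_Fmax_superset hX
  exact ⟨A, hA, B, hB, hAX, hXB⟩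
end

section
/- Let D = (E, F) be a delta-matroid and e ∈ E of type pp (some minimum feasible set contains e and some maximum feasible set omits e). Then w(D^{*|e}) = w(D) + 2 and w(D^{×|e}) = w(D) + 1, where w denotes width. -/
open Finset Polynomial

variable {α : Type*} [DecidableEq α]

/-! Twisting by `{e}` toggles `e` in every feasible set, so sizes move by exactly one: a minimum
set containing `e` drops to `r_min - 1` and a maximum set avoiding `e` grows to `r_max + 1`.
Loop complementation at `e` only adds or removes sets of the form `X ∪ {e}` with `X` feasible, so
all sizes stay in `[r_min, r_max + 1]`; minimum sets survive, and `B ∪ {e}` for a maximum set `B`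
avoiding `e` is new. -/

namespace SS

omit [DecidableEq α] in
lemma rmin_le {F : Finset (Finset α)} {X : Finset α} (hX : X ∈ F) : rmin F ≤ X.card :=
  Nat.sInf_le ⟨X, hX, rfl⟩

omit [DecidableEq α] in
lemma card_le_rmax {F : Finset (Finset α)} {X : Finset α} (hX : X ∈ F) : X.card ≤ rmax F :=
  Finset.le_sup hX

omit [DecidableEq α] in
lemma rmin_le_rmax {F : Finset (Finset α)} {X : Finset α} (hX : X ∈ F) : rmin F ≤ rmax F :=
  (rmin_le hX).trans (card_le_rmax hX)

omit [DecidableEq α] in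
lemma rmax_eq_card {F : Finset (Finset α)} {Y : Finset α} (hY : Y ∈ F)
    (h : ∀ Z ∈ F, Z.card ≤ Y.card) : rmax F = Y.card :=
  le_antisymm (Finset.sup_le h) (card_le_rmax hY)

omit [DecidableEq α] in
lemma rmin_eq_card {F : Finset (Finset α)} {Y : Finset α} (hY : Y ∈ F)
    (h : ∀ Z ∈ F, Y.card ≤ Z.card) : rmin F = Y.card :=
  le_antisymm (rmin_le hY) (le_csInf ⟨Y.card, Y, hY, rfl⟩ (by rintro _ ⟨Z, hZ, rfl⟩; exact h Z hZ))

lemma singleton_symmDiff_of_mem {e : α} {X : Finset α} (h : e ∈ X) :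
    symmDiff {e} X = X.erase e := by
  ext x; by_cases hx : x = e <;> simp_all [Finset.mem_symmDiff]

lemma singleton_symmDiff_of_notMem {e : α} {X : Finset α} (h : e ∉ X) :
    symmDiff {e} X = insert e X := by
  ext x; by_cases hx : x = e <;> simp_all [Finset.mem_symmDiff]

lemma card_singleton_symmDiff_le (e : α) (X : Finset α) :
    (symmDiff {e} X).card ≤ X.card + 1 := by
  by_cases h : e ∈ X
  · rw [singleton_symmDiff_of_mem h]; exact (Finset.card_erase_le).trans (Nat.le_succ _)
  · rw [singleton_symmDiff_of_notMem h, Finset.card_insert_of_notMem h]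

lemma card_sub_one_le_card_singleton_symmDiff (e : α) (X : Finset α) :
    X.card - 1 ≤ (symmDiff {e} X).card := by
  by_cases h : e ∈ X
  · rw [singleton_symmDiff_of_mem h, Finset.card_erase_of_mem h]
  · rw [singleton_symmDiff_of_notMem h, Finset.card_insert_of_notMem h]; omega

lemma rmax_twist_singleton {F : Finset (Finset α)} {e : α} (h : ∃ B ∈ Fmax F, e ∉ B) :
    rmax (twist {e} F) = rmax F + 1 := by
  obtain ⟨B, hB, heB⟩ := h
  obtain ⟨hBF, hBcard⟩ := Finset.mem_filter.mp hB
  have hcard : (symmDiff {e} B).card = rmax F + 1 := by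
    rw [singleton_symmDiff_of_notMem heB, Finset.card_insert_of_notMem heB, hBcard]
  rw [← hcard]
  refine rmax_eq_card (Finset.mem_image_of_mem _ hBF) ?_
  intro Z hZ
  obtain ⟨X, hX, rfl⟩ := Finset.mem_image.mp hZ
  exact hcard ▸ (card_singleton_symmDiff_le e X).trans (Nat.succ_le_succ (card_le_rmax hX))

lemma rmin_twist_singleton {F : Finset (Finset α)} {e : α} (h : ∃ A ∈ Fmin F, e ∈ A) :
    rmin (twist {e} F) = rmin F - 1 := by
  obtain ⟨A, hA, heA⟩ := h
  obtain ⟨hAF, hAcard⟩ := Finset.mem_filter.mp hA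
  have hcard : (symmDiff {e} A).card = rmin F - 1 := by
    rw [singleton_symmDiff_of_mem heA, Finset.card_erase_of_mem heA, hAcard]
  rw [← hcard]
  refine rmin_eq_card (Finset.mem_image_of_mem _ hAF) ?_
  intro Z hZ
  obtain ⟨X, hX, rfl⟩ := Finset.mem_image.mp hZ
  exact hcard ▸ (Nat.sub_le_sub_right (rmin_le hX) 1).trans
    (card_sub_one_le_card_singleton_symmDiff e X)

lemma width_twist_singleton {F : Finset (Finset α)} {e : α} (hmin : ∃ A ∈ Fmin F, e ∈ A)
    (hmax : ∃ B ∈ Fmax F, e ∉ B) : width (twist {e} F) = width F + 2 := by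
  obtain ⟨A, hA, heA⟩ := hmin
  obtain ⟨hAF, hAcard⟩ := Finset.mem_filter.mp hA
  have hpos : 1 ≤ rmin F := hAcard ▸ Finset.card_pos.mpr ⟨e, heA⟩
  have hle := rmin_le_rmax hAF
  rw [width, width, rmax_twist_singleton hmax, rmin_twist_singleton ⟨A, hA, heA⟩]
  omega

lemma mem_lc_iff {F : Finset (Finset α)} {e : α} {Z : Finset α} :
    Z ∈ lc e F ↔ (Z ∈ F ∧ ∀ X ∈ F, e ∉ X → insert e X ≠ Z) ∨
      (∃ X ∈ F, e ∉ X ∧ insert e X = Z) ∧ Z ∉ F := by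
  simp [lc, Finset.mem_symmDiff, and_assoc]

lemma card_mem_Icc_of_mem_lc {F : Finset (Finset α)} {e : α} {Z : Finset α} (hZ : Z ∈ lc e F) :
    Z.card ∈ Set.Icc (rmin F) (rmax F + 1) := by
  rcases mem_lc_iff.mp hZ with ⟨hZF, -⟩ | ⟨⟨X, hXF, heX, rfl⟩, -⟩
  · exact ⟨rmin_le hZF, (card_le_rmax hZF).trans (Nat.le_succ _)⟩
  · rw [Finset.card_insert_of_notMem heX]
    exact ⟨(rmin_le hXF).trans (Nat.le_succ _), Nat.succ_le_succ (card_le_rmax hXF)⟩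

lemma mem_lc_of_mem_Fmin {F : Finset (Finset α)} {A : Finset α} (e : α) (hA : A ∈ Fmin F) :
    A ∈ lc e F := by
  obtain ⟨hAF, hAcard⟩ := Finset.mem_filter.mp hA
  refine mem_lc_iff.mpr (Or.inl ⟨hAF, fun X hXF heX hXA => ?_⟩)
  have := rmin_le hXF
  rw [← hAcard, ← hXA, Finset.card_insert_of_notMem heX] at this
  omega

lemma insert_mem_lc_of_mem_Fmax {F : Finset (Finset α)} {B : Finset α} {e : α}
    (hB : B ∈ Fmax F) (heB : e ∉ B) : insert e B ∈ lc e F := by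
  obtain ⟨hBF, hBcard⟩ := Finset.mem_filter.mp hB
  refine mem_lc_iff.mpr (Or.inr ⟨⟨B, hBF, heB, rfl⟩, fun hin => ?_⟩)
  have := card_le_rmax hin
  rw [Finset.card_insert_of_notMem heB, hBcard] at this
  omega

lemma rmin_lc {F : Finset (Finset α)} (e : α) (hmin : (Fmin F).Nonempty) :
    rmin (lc e F) = rmin F := by
  obtain ⟨A, hA⟩ := hmin
  obtain ⟨-, hAcard⟩ := Finset.mem_filter.mp hA
  rw [rmin_eq_card (mem_lc_of_mem_Fmin e hA), hAcard]
  intro Z hZ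
  rw [hAcard]
  exact (card_mem_Icc_of_mem_lc hZ).1

lemma rmax_lc {F : Finset (Finset α)} {e : α} (hmax : ∃ B ∈ Fmax F, e ∉ B) :
    rmax (lc e F) = rmax F + 1 := by
  obtain ⟨B, hB, heB⟩ := hmax
  obtain ⟨-, hBcard⟩ := Finset.mem_filter.mp hB
  rw [rmax_eq_card (insert_mem_lc_of_mem_Fmax hB heB), Finset.card_insert_of_notMem heB, hBcard]
  intro Z hZ
  rw [Finset.card_insert_of_notMem heB, hBcard]
  exact (card_mem_Icc_of_mem_lc hZ).2

lemma width_lc {F : Finset (Finset α)} {e : α} (hmin : (Fmin F).Nonempty)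
    (hmax : ∃ B ∈ Fmax F, e ∉ B) : width (lc e F) = width F + 1 := by
  obtain ⟨A, hA⟩ := hmin
  have hle := rmin_le_rmax (Finset.mem_filter.mp hA).1
  rw [width, width, rmax_lc hmax, rmin_lc e ⟨A, hA⟩]
  omega

end SS

open SS

theorem stmt15_general (F : Finset (Finset α)) (e : α)
    (hp : ∃ A ∈ SS.Fmin F, e ∈ A) (hq : ∃ B ∈ SS.Fmax F, e ∉ B) :
    SS.width (SS.twist {e} F) = SS.width F + 2 ∧
    SS.width (SS.lc e F) = SS.width F + 1 :=
  have ⟨A, hA, _⟩ := hp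
  ⟨width_twist_singleton hp hq, width_lc ⟨A, hA⟩ hq⟩

theorem stmt15 (F : Finset (Finset α)) (hD : SS.IsDeltaMatroid F) (e : α)
    (hp : ∃ A ∈ SS.Fmin F, e ∈ A) (hq : ∃ B ∈ SS.Fmax F, e ∉ B) :
    SS.width (SS.twist {e} F) = SS.width F + 2 ∧
    SS.width (SS.lc e F) = SS.width F + 1 :=
  stmt15_general F e hp hq
end
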